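/- arXiv:1509.03206 — 8 statements merged into one kernel-verified Lean document; each statement's English description precedes it below -/
import Mathlib

section
/- Let P = {x ∈ ℝ^n : Ax = b, l ≤ x ≤ u} be a polytope, x ∈ P ∩ ℤ^n, and z ∈ ℤ^n a feasible direction for x (x + z ∈ P) that is exhaustive, i.e., x + 2z ∉ P. Then with ρ defined via ρ(x,z) = Σ_j (z⁺_j/(u_j - x_j) when x_j < u_j) + Σ_j (z⁻_j/(x_j - l_j) when x_j > l_j), one has ρ(x,z) > 1/2. -/
/-- Let `P = {x : Ax = b, l ≤ x ≤ u}` be a polytope, `x ∈ P ∩ ℤ^n` and `z ∈ ℤ^n`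
a feasible direction for `x` (`x + z ∈ P`) which is exhaustive (`x + 2z ∉ P`).  Then the
standard potential `ρ(x,z) = Σ_j z⁺_j/(u_j - x_j) + Σ_j z⁻_j/(x_j - l_j)` (terms taken to be
`0` at tight bounds, where feasibility forces the corresponding part of `z` to vanish)
satisfies `ρ(x,z) > 1/2`. -/
theorem stmt1 (m n : ℕ) (A : Matrix (Fin m) (Fin n) ℝ) (b : Fin m → ℝ)
    (l u : Fin n → ℝ) (x z : Fin n → ℤ)
    (hxA : A.mulVec (fun j => (x j : ℝ)) = b)
    (hxb : ∀ j, l j ≤ (x j : ℝ) ∧ (x j : ℝ) ≤ u j)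
    (hzA : A.mulVec (fun j => ((x j : ℝ) + (z j : ℝ))) = b)
    (hzb : ∀ j, l j ≤ (x j : ℝ) + (z j : ℝ) ∧ (x j : ℝ) + (z j : ℝ) ≤ u j)
    (hexh : ¬ (A.mulVec (fun j => ((x j : ℝ) + 2 * (z j : ℝ))) = b ∧
      ∀ j, l j ≤ (x j : ℝ) + 2 * (z j : ℝ) ∧ (x j : ℝ) + 2 * (z j : ℝ) ≤ u j)) :
    (1 : ℝ) / 2 <
      ∑ j, ((if (x j : ℝ) < u j then ((max (z j) 0 : ℤ) : ℝ) / (u j - (x j : ℝ)) else 0) +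
        (if l j < (x j : ℝ) then ((max (-z j) 0 : ℤ) : ℝ) / ((x j : ℝ) - l j) else 0)) := by
  -- A(x+2z) = b by linearity
  have h2A : A.mulVec (fun j => ((x j : ℝ) + 2 * (z j : ℝ))) = b := by
    have heq : (fun j => ((x j : ℝ) + 2 * (z j : ℝ)))
        = (fun j => ((x j : ℝ) + (z j : ℝ))) + (fun j => ((x j : ℝ) + (z j : ℝ)))
          - (fun j => (x j : ℝ)) := by
      funext j; simp [Pi.add_apply, Pi.sub_apply]; ring
    rw [heq, Matrix.mulVec_sub, Matrix.mulVec_add, hzA, hxA]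
    simp
  -- hence some bound is violated
  have hbad : ∃ j, ¬ (l j ≤ (x j : ℝ) + 2 * (z j : ℝ) ∧ (x j : ℝ) + 2 * (z j : ℝ) ≤ u j) := by
    by_contra h
    push_neg at h
    exact hexh ⟨h2A, h⟩
  obtain ⟨j, hj⟩ := hbad
  -- all terms are nonnegative
  have hnn : ∀ k ∈ Finset.univ, (0:ℝ) ≤
      (if (x k : ℝ) < u k then ((max (z k) 0 : ℤ) : ℝ) / (u k - (x k : ℝ)) else 0) +
        (if l k < (x k : ℝ) then ((max (-z k) 0 : ℤ) : ℝ) / ((x k : ℝ) - l k) else 0) := by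
    intro k _
    have h1 : (0:ℝ) ≤ if (x k : ℝ) < u k then ((max (z k) 0 : ℤ) : ℝ) / (u k - (x k : ℝ)) else 0 := by
      split_ifs with h
      · apply div_nonneg
        · exact_mod_cast le_max_right (z k) 0
        · linarith
      · exact le_refl 0
    have h2 : (0:ℝ) ≤ if l k < (x k : ℝ) then ((max (-z k) 0 : ℤ) : ℝ) / ((x k : ℝ) - l k) else 0 := by
      split_ifs with h
      · apply div_nonneg
        · exact_mod_cast le_max_right (-z k) 0
        · linarith
      · exact le_refl 0
    linarith
  have hsum : (if (x j : ℝ) < u j then ((max (z j) 0 : ℤ) : ℝ) / (u j - (x j : ℝ)) else 0) +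
        (if l j < (x j : ℝ) then ((max (-z j) 0 : ℤ) : ℝ) / ((x j : ℝ) - l j) else 0) ≤
      ∑ k, ((if (x k : ℝ) < u k then ((max (z k) 0 : ℤ) : ℝ) / (u k - (x k : ℝ)) else 0) +
        (if l k < (x k : ℝ) then ((max (-z k) 0 : ℤ) : ℝ) / ((x k : ℝ) - l k) else 0)) :=
    Finset.single_le_sum hnn (Finset.mem_univ j)
  refine lt_of_lt_of_le ?_ hsum
  rcases not_and_or.mp hj with hl | hu
  · -- lower bound violated: z j < 0
    push_neg at hl
    have hz : (z j : ℝ) < 0 := by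
      have := (hxb j).1
      linarith
    have hx : l j < (x j : ℝ) := by
      have := (hzb j).1
      linarith
    have hterm : (1:ℝ)/2 < ((max (-z j) 0 : ℤ) : ℝ) / ((x j : ℝ) - l j) := by
      have hmax : ((max (-z j) 0 : ℤ) : ℝ) = -(z j : ℝ) := by
        have : max (-z j) 0 = -z j := max_eq_left (by exact_mod_cast le_of_lt (by exact_mod_cast neg_pos.mpr (show (z j : ℝ) < 0 from hz) : (0:ℝ) < (-z j : ℤ))) 
        rw [this]; push_cast; ring
      rw [hmax]
      rw [lt_div_iff₀ (by linarith)]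
      linarith
    have h1 : (0:ℝ) ≤ if (x j : ℝ) < u j then ((max (z j) 0 : ℤ) : ℝ) / (u j - (x j : ℝ)) else 0 := by
      split_ifs with h
      · apply div_nonneg
        · exact_mod_cast le_max_right (z j) 0
        · linarith
      · exact le_refl 0
    rw [if_pos hx]
    linarith
  · -- upper bound violated: z j > 0
    push_neg at hu
    have hz : (0:ℝ) < (z j : ℝ) := by
      have := (hxb j).2
      linarith
    have hx : (x j : ℝ) < u j := by
      have := (hzb j).2
      linarith
    have hterm : (1:ℝ)/2 < ((max (z j) 0 : ℤ) : ℝ) / (u j - (x j : ℝ)) := by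
      have hmax : ((max (z j) 0 : ℤ) : ℝ) = (z j : ℝ) := by
        have : max (z j) 0 = z j := max_eq_left (by exact_mod_cast le_of_lt hz)
        rw [this]
      rw [hmax]
      rw [lt_div_iff₀ (by linarith)]
      linarith
    have h2 : (0:ℝ) ≤ if l j < (x j : ℝ) then ((max (-z j) 0 : ℤ) : ℝ) / ((x j : ℝ) - l j) else 0 := by
      split_ifs with h
      · apply div_nonneg
        · exact_mod_cast le_max_right (-z j) 0
        · linarith
      · exact le_refl 0
    rw [if_pos hx]
    linarith
end

section
/- Let c ∈ ℤ^n_+, μ ≥ 1 an integer, and write c = ⌊c/μ⌋·μ + r with r ∈ {0,…,μ-1}^n. If x^μ ∈ P ∩ ℤ^n maximizes ⌊c/μ⌋·x over P ∩ ℤ^n and x⋆ ∈ P ∩ ℤ^n maximizes c·x over P ∩ ℤ^n, then c·(x⋆ - x^μ) ≤ μ · max{𝟙·x : x ∈ P}, where 𝟙 is the all-one vector. -/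
/-- Let `c ∈ ℤ^n_+`, `μ ≥ 1` an integer, and write `c = ⌊c/μ⌋·μ + r`
with `r ∈ {0,…,μ-1}^n`.  If `x^μ ∈ P ∩ ℤ^n` maximizes `⌊c/μ⌋·x` over `P ∩ ℤ^n` and
`x⋆ ∈ P ∩ ℤ^n` maximizes `c·x` over `P ∩ ℤ^n`, then
`c·(x⋆ - x^μ) ≤ μ · max{𝟙·x : x ∈ P}`. -/
theorem stmt5 (n : ℕ) (c : Fin n → ℤ) (hc : ∀ j, 0 ≤ c j) (μ : ℤ) (hμ : 1 ≤ μ)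
    (P : Set (Fin n → ℝ)) (hP : ∀ y ∈ P, ∀ j, 0 ≤ y j ∧ y j ≤ 1)
    (xμ xs : Fin n → ℤ)
    (hxμP : (fun j => (xμ j : ℝ)) ∈ P) (hxsP : (fun j => (xs j : ℝ)) ∈ P)
    (hxμopt : ∀ y : Fin n → ℤ, (fun j => (y j : ℝ)) ∈ P →
      ∑ j, (c j / μ) * y j ≤ ∑ j, (c j / μ) * xμ j)
    (hxsopt : ∀ y : Fin n → ℤ, (fun j => (y j : ℝ)) ∈ P →
      ∑ j, c j * y j ≤ ∑ j, c j * xs j)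
    (M : ℝ) (hM : IsGreatest {s : ℝ | ∃ x ∈ P, s = ∑ j, x j} M) :
    ∑ j, (c j : ℝ) * ((xs j : ℝ) - (xμ j : ℝ)) ≤ μ * M := by

  have hμ0 : (0:ℤ) < μ := by linarith
  have hxμ0 : ∀ j, 0 ≤ xμ j := fun j => by exact_mod_cast (hP _ hxμP j).1
  have hxs0 : ∀ j, 0 ≤ xs j := fun j => by exact_mod_cast (hP _ hxsP j).1
  have h1 : ∑ j, (c j / μ) * xs j ≤ ∑ j, (c j / μ) * xμ j := hxμopt xs hxsP
  have hkey : ∑ j, c j * (xs j - xμ j) ≤ μ * ∑ j, xs j := by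
    have e : ∀ j ∈ Finset.univ, c j * (xs j - xμ j)
        = (μ * ((c j / μ) * xs j) - μ * ((c j / μ) * xμ j)) + (c j % μ) * (xs j - xμ j) := by
      intro j _
      have h := Int.mul_ediv_add_emod (c j) μ
      linear_combination (xμ j - xs j) * h
    rw [Finset.sum_congr rfl e, Finset.sum_add_distrib, Finset.sum_sub_distrib,
      ← Finset.mul_sum, ← Finset.mul_sum]
    have h2 : ∑ j, (c j % μ) * (xs j - xμ j) ≤ ∑ j, μ * xs j := by
      apply Finset.sum_le_sum
      intro j _
      have hr0 : 0 ≤ c j % μ := Int.emod_nonneg _ (by linarith)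
      have hr1 : c j % μ < μ := Int.emod_lt_of_pos _ hμ0
      nlinarith [hxs0 j, hxμ0 j]
    rw [← Finset.mul_sum] at h2
    nlinarith [h1, h2]
  have hsM : (∑ j, (xs j : ℝ)) ≤ M := hM.2 ⟨_, hxsP, rfl⟩
  have hcast : (∑ j, (c j : ℝ) * ((xs j:ℝ) - (xμ j:ℝ))) ≤ (μ:ℝ) * ∑ j, (xs j : ℝ) := by
    exact_mod_cast hkey
  have hμR : (0:ℝ) ≤ (μ:ℝ) := by exact_mod_cast (by linarith : (0:ℤ) ≤ μ)
  nlinarith [mul_le_mul_of_nonneg_left hsM hμR]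
end

section
/- Let P ⊆ [0,1]^n be a polytope such that every integral point of P has at most f nonzero entries. Let c' = 2c^μ + c̃ with c̃ ∈ {0,1}^n, let x^μ be an integral maximizer of c^μ over P and x' an integral maximizer of c' over P. Then c'·(x' - x^μ) ≤ 2f. In particular, within one bit-scaling phase at most 2f augmentations (each improving the integral objective value by at least 1) can occur. -/
/-- Let `P ⊆ [0,1]^n` be a polytope whose integral points all have at most
`f` nonzero entries.  Let `c' = 2c^μ + c̃` with `c̃ ∈ {0,1}^n`, let `x^μ` be an integral
maximizer of `c^μ` over `P` and `x'` an integral maximizer of `c'` over `P`.  Then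
`c'·(x' - x^μ) ≤ 2f` (so at most `2f` augmentations occur in one bit-scaling phase). -/
theorem stmt6 (n : ℕ) (P : Set (Fin n → ℝ)) (hP : ∀ y ∈ P, ∀ j, 0 ≤ y j ∧ y j ≤ 1)
    (f : ℕ)
    (hsupp : ∀ x : Fin n → ℤ, (fun j => (x j : ℝ)) ∈ P →
      (Finset.univ.filter (fun j => x j ≠ 0)).card ≤ f)
    (cμ ct : Fin n → ℤ) (hcμ : ∀ j, 0 ≤ cμ j) (hct : ∀ j, ct j = 0 ∨ ct j = 1)
    (xμ x' : Fin n → ℤ)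
    (hxμP : (fun j => (xμ j : ℝ)) ∈ P) (hx'P : (fun j => (x' j : ℝ)) ∈ P)
    (hxμopt : ∀ y : Fin n → ℤ, (fun j => (y j : ℝ)) ∈ P →
      ∑ j, cμ j * y j ≤ ∑ j, cμ j * xμ j)
    (hx'opt : ∀ y : Fin n → ℤ, (fun j => (y j : ℝ)) ∈ P →
      ∑ j, (2 * cμ j + ct j) * y j ≤ ∑ j, (2 * cμ j + ct j) * x' j) :
    ∑ j, (2 * cμ j + ct j) * (x' j - xμ j) ≤ 2 * f := by
  -- nonnegativity of coordinates
  have hxμ0 : ∀ j, 0 ≤ xμ j := by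
    intro j
    have := (hP _ hxμP j).1
    exact_mod_cast this
  -- cμ part: 2cμ·(x'-xμ) ≤ 0
  have h1 : ∑ j, cμ j * x' j ≤ ∑ j, cμ j * xμ j := hxμopt x' hx'P
  -- ct part: ct·x' ≤ f
  have h2 : ∑ j, ct j * x' j ≤ (f : ℤ) := by
    have hbd : ∀ j, ct j * x' j ≤ if x' j ≠ 0 then 1 else 0 := by
      intro j
      have h1' : (x' j : ℝ) ≤ 1 := (hP _ hx'P j).2
      have hle : x' j ≤ 1 := by exact_mod_cast h1'
      by_cases h : x' j = 0 <;> simp [h]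
      · rcases hct j with h' | h' <;> simp [h']
        · nlinarith [hle, (by exact_mod_cast (hP _ hx'P j).1 : (0:ℤ) ≤ x' j)]
    calc ∑ j, ct j * x' j ≤ ∑ j, (if x' j ≠ 0 then (1:ℤ) else 0) :=
          Finset.sum_le_sum fun j _ => hbd j
      _ = ((Finset.univ.filter (fun j => x' j ≠ 0)).card : ℤ) := by
          rw [Finset.sum_boole]
      _ ≤ (f : ℤ) := by exact_mod_cast hsupp x' hx'P
  -- ct·xμ ≥ 0
  have h3 : 0 ≤ ∑ j, ct j * xμ j := by
    apply Finset.sum_nonneg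
    intro j _
    rcases hct j with h' | h' <;> simp [h', hxμ0 j]
  have key : ∑ j, (2 * cμ j + ct j) * (x' j - xμ j)
      = 2 * (∑ j, cμ j * x' j - ∑ j, cμ j * xμ j)
        + (∑ j, ct j * x' j - ∑ j, ct j * xμ j) := by
    have e : ∀ j, (2 * cμ j + ct j) * (x' j - xμ j)
        = (2 * (cμ j * x' j) + ct j * x' j) - (2 * (cμ j * xμ j) + ct j * xμ j) :=
      fun j => by ring
    rw [Finset.sum_congr rfl fun j _ => e j, Finset.sum_sub_distrib,
      Finset.sum_add_distrib, Finset.sum_add_distrib, ← Finset.mul_sum, ← Finset.mul_sum]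
    ring
  rw [key]
  have : (2 * f : ℤ) = 2 * (f : ℤ) := by push_cast; ring
  linarith
end

section
/- Suppose a sequence of integer feasible points y⁰, y¹, …, y^m in a polytope P ⊆ [0,1]^n satisfies, for each i, c·(y^{i+1} - y^i) ≥ μ·‖y^{i+1} - y^i‖₁ with y^{i+1} ≠ y^i, where μ ≥ (1/2)·c·(x⋆ - y⁰)/‖x⋆ - y⁰‖₁ for an optimal integral solution x⋆ with c·x⋆ ≥ c·y^m. Then m ≤ 2n, i.e., at most 2n such augmentation steps can occur within one geometric scaling phase over the 0/1 cube. -/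
/-- If 0/1 points `y⁰, …, y^m` in a polytope `P ⊆ [0,1]^n` satisfy
`c·(y^{i+1} - y^i) ≥ μ·‖y^{i+1} - y^i‖₁` with `y^{i+1} ≠ y^i` for each step, where
`μ ≥ (1/2)·c·(x⋆ - y⁰)/‖x⋆ - y⁰‖₁` for an optimal integral 0/1 solution `x⋆` with
`c·x⋆ ≥ c·y^m` (and positive remaining gap `c·(x⋆ - y⁰) > 0`), then `m ≤ 2n`. -/
theorem stmt7 (n : ℕ) (P : Set (Fin n → ℝ)) (c : Fin n → ℝ) (μ : ℝ)
    (m : ℕ) (y : ℕ → Fin n → ℝ) (xs : Fin n → ℝ)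
    (hy : ∀ i ≤ m, y i ∈ P ∧ ∀ j, y i j = 0 ∨ y i j = 1)
    (hxsP : xs ∈ P) (hxs01 : ∀ j, xs j = 0 ∨ xs j = 1)
    (hopt : ∑ j, c j * y m j ≤ ∑ j, c j * xs j)
    (hstep : ∀ i < m, y (i + 1) ≠ y i ∧
      μ * (∑ j, |y (i + 1) j - y i j|) ≤ ∑ j, c j * (y (i + 1) j - y i j))
    (hgap : 0 < ∑ j, c j * (xs j - y 0 j))
    (hμ : (1 / 2) * (∑ j, c j * (xs j - y 0 j)) / (∑ j, |xs j - y 0 j|) ≤ μ) :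
    m ≤ 2 * n := by
  set G := ∑ j, c j * (xs j - y 0 j) with hGdef
  set D := ∑ j, |xs j - y 0 j| with hDdef
  have hDnn : (0:ℝ) ≤ D := Finset.sum_nonneg fun j _ => abs_nonneg _
  have hDpos : 0 < D := by
    rcases hDnn.lt_or_eq with h | h
    · exact h
    · exfalso
      have hz : ∀ j ∈ Finset.univ, |xs j - y 0 j| = 0 :=
        (Finset.sum_eq_zero_iff_of_nonneg (fun j _ => abs_nonneg _)).mp h.symm
      have : G = 0 := Finset.sum_eq_zero fun j _ => by
        have := hz j (Finset.mem_univ j)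
        have : xs j - y 0 j = 0 := abs_eq_zero.mp this
        rw [this, mul_zero]
      linarith
  have hDn : D ≤ (n:ℝ) := by
    have : D ≤ ∑ _j : Fin n, (1:ℝ) := by
      apply Finset.sum_le_sum
      intro j _
      rcases hxs01 j with h1 | h1 <;> rcases (hy 0 (Nat.zero_le m)).2 j with h2 | h2 <;>
        rw [h1, h2] <;> norm_num
    simpa using this
  have hμpos : 0 < μ := lt_of_lt_of_le (by positivity) hμ
  have hstep' : ∀ i < m, μ ≤ (∑ j, c j * y (i+1) j) - ∑ j, c j * y i j := by
    intro i hi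
    obtain ⟨hne, hmu⟩ := hstep i hi
    have hl1 : (1:ℝ) ≤ ∑ j, |y (i+1) j - y i j| := by
      obtain ⟨j, hj⟩ := Function.ne_iff.mp hne
      have h1 := (hy (i+1) (by omega)).2 j
      have h2 := (hy i (by omega)).2 j
      have habs : |y (i+1) j - y i j| = 1 := by
        rcases h1 with h1 | h1 <;> rcases h2 with h2 | h2 <;>
          rw [h1, h2] at hj ⊢ <;> norm_num <;> exact hj rfl
      calc (1:ℝ) = |y (i+1) j - y i j| := habs.symm
        _ ≤ ∑ j, |y (i+1) j - y i j| :=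
            Finset.single_le_sum (f := fun j => |y (i+1) j - y i j|)
              (fun j _ => abs_nonneg _) (Finset.mem_univ j)
    have hmul : μ * 1 ≤ μ * ∑ j, |y (i+1) j - y i j| :=
      mul_le_mul_of_nonneg_left hl1 hμpos.le
    have heq : ∑ j, c j * (y (i+1) j - y i j)
        = (∑ j, c j * y (i+1) j) - ∑ j, c j * y i j := by
      rw [← Finset.sum_sub_distrib]
      exact Finset.sum_congr rfl fun j _ => by ring
    rw [heq] at hmu
    linarith
  have htel : ∀ k, k ≤ m → (k:ℝ) * μ ≤ (∑ j, c j * y k j) - ∑ j, c j * y 0 j := by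
    intro k
    induction k with
    | zero => intro _; simp
    | succ k ih =>
      intro hk
      have h1 := ih (by omega)
      have h2 := hstep' k (by omega)
      push_cast
      linarith
  have hGeq : G = (∑ j, c j * xs j) - ∑ j, c j * y 0 j := by
    rw [hGdef, ← Finset.sum_sub_distrib]
    exact Finset.sum_congr rfl fun j _ => by ring
  have hmμ : (m:ℝ) * μ ≤ G := by
    have := htel m le_rfl
    rw [hGeq]
    linarith
  have hkey : (m:ℝ) * ((1/2) * G / D) ≤ G :=
    le_trans (mul_le_mul_of_nonneg_left hμ (Nat.cast_nonneg m)) hmμ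
  have h2D : (0:ℝ) < 2 * D := by linarith
  have hmG : (m:ℝ) * G ≤ G * (2 * D) := by
    have heq : (m:ℝ) * ((1/2) * G / D) = (m:ℝ) * G / (2 * D) := by
      field_simp
    rw [heq] at hkey
    exact (div_le_iff₀ h2D).mp hkey
  have hm2D : (m:ℝ) ≤ 2 * D := by nlinarith
  have : (m:ℝ) ≤ 2 * n := by linarith
  exact_mod_cast this
end

section
/- Define for k ≥ 1 and n = 8k - 2 the points y¹, …, y^{2k} ∈ {0,1}^n and cost vectors c^ℓ (ℓ ≥ 1) as in the bit-scaling worst-case construction. Then for every ℓ ≥ 1 and every j ∈ {1,…,k-1} ∪ {k+1,…,2k-1}, one has c^ℓ·y^j = c^ℓ·y^{j+1} + 1. -/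
/-! Consecutive points `y^j`, `y^{j+1}` of the same group differ only in two coordinates:
`y^j - y^{j+1} = e_m - e_{k-1+m}` with `m = j` or `m = j - k`, one coordinate in each of the
first two blocks. On the first block `c^ℓ` is constantly `2^{ℓ-1}`, on the second constantly
`2^{ℓ-1} - 1`, so the two costs differ by exactly `1`. -/

open Matrix

/-- The points `y^j ∈ {0,1}^{8k-2}` of the bit-scaling worst-case construction
(coordinates are indexed `1, …, 8k-2`; the four blocks have sizes
`k-1`, `k-1`, `3k`, `3k`). -/
def yvec (k j : ℕ) (i : Fin (8 * k - 2)) : ℤ :=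
  let i' := (i : ℕ) + 1
  let j' := if j ≤ k then j else j - k
  if i' ≤ k - 1 then (if j' ≤ i' then 1 else 0)
  else if i' ≤ 2 * k - 2 then (if i' - (k - 1) < j' then 1 else 0)
  else if i' ≤ 5 * k - 2 then (if j ≤ k then 1 else 0)
  else (if j ≤ k then 0 else 1)

/-- The 0/1 layers `d^ℓ` of the cost vectors of the worst-case construction. -/
def dvec (k l : ℕ) (i : Fin (8 * k - 2)) : ℤ :=
  let i' := (i : ℕ) + 1
  if l = 1 then
    if i' ≤ k - 1 then 1
    else if i' ≤ 2 * k - 2 then 0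
    else if i' ≤ 3 * k - 2 then 1
    else 0
  else
    if i' ≤ k - 1 then 0
    else if i' ≤ 2 * k - 2 then 1
    else if i' ≤ 5 * k - 2 then (if Odd l then 1 else 0)
    else (if Even l then 1 else 0)

/-- The cost vectors `c^ℓ` with `c⁰ = 0` and `c^ℓ = 2c^{ℓ-1} + d^ℓ`. -/
def cvec (k : ℕ) : ℕ → Fin (8 * k - 2) → ℤ
  | 0 => fun _ => 0
  | l + 1 => fun i => 2 * cvec k l i + dvec k (l + 1) i

theorem dotProduct_eq_add_of_sub_eq_single_sub_single {ι R : Type*} [Fintype ι] [DecidableEq ι]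
    [CommRing R] {c x x' : ι → R} {a b : ι}
    (h : x - x' = Pi.single a 1 - Pi.single b 1) :
    c ⬝ᵥ x = c ⬝ᵥ x' + (c a - c b) := by
  have hdiff : c ⬝ᵥ (x - x') = c a - c b := by
    rw [h, dotProduct_sub, dotProduct_single, dotProduct_single, mul_one, mul_one]
  rw [dotProduct_sub] at hdiff
  rw [← hdiff, add_sub_cancel]

theorem cvec_succ_of_lt {k : ℕ} {i : Fin (8 * k - 2)} (hi : (i : ℕ) < k - 1) (l : ℕ) :
    cvec k (l + 1) i = 2 ^ l := by
  induction l with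
  | zero => simp [cvec, dvec, show (i : ℕ) + 1 ≤ k - 1 by omega]
  | succ l ih =>
    change 2 * cvec k (l + 1) i + dvec k (l + 2) i = _
    rw [ih, pow_succ]
    simp [dvec, show (i : ℕ) + 1 ≤ k - 1 by omega, mul_comm]

theorem cvec_succ_of_le_of_lt {k : ℕ} {i : Fin (8 * k - 2)} (hi₁ : k - 1 ≤ (i : ℕ))
    (hi₂ : (i : ℕ) < 2 * k - 2) (l : ℕ) :
    cvec k (l + 1) i = 2 ^ l - 1 := by
  have h₁ : ¬ (i : ℕ) + 1 ≤ k - 1 := by omega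
  have h₂ : (i : ℕ) + 1 ≤ 2 * k - 2 := by omega
  induction l with
  | zero => simp [cvec, dvec, h₁, h₂]
  | succ l ih =>
    change 2 * cvec k (l + 1) i + dvec k (l + 2) i = _
    rw [ih, pow_succ]
    simp only [dvec, h₁, h₂, if_false, if_true, show l + 2 ≠ 1 by omega]
    ring

theorem yvec_sub_yvec_succ {k j m : ℕ} (hm₁ : 1 ≤ m) (hm₂ : m ≤ k - 1) (hj : j = m ∨ j = k + m) :
    yvec k j - yvec k (j + 1) =
      Pi.single ⟨m - 1, by omega⟩ 1 - Pi.single ⟨k - 2 + m, by omega⟩ 1 := by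
  funext i
  simp only [Pi.sub_apply, Pi.single_apply, Fin.ext_iff, yvec]
  rcases hj with rfl | rfl <;> split_ifs <;> omega

theorem stmt11_general (k : ℕ) (l : ℕ) (hl : 1 ≤ l) (j : ℕ)
    (hj : (1 ≤ j ∧ j ≤ k - 1) ∨ (k + 1 ≤ j ∧ j ≤ 2 * k - 1)) :
    ∑ i, cvec k l i * yvec k j i = ∑ i, cvec k l i * yvec k (j + 1) i + 1 := by
  obtain ⟨m, hm₁, hm₂, hjm⟩ : ∃ m, 1 ≤ m ∧ m ≤ k - 1 ∧ (j = m ∨ j = k + m) := by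
    rcases hj with hj | hj
    · exact ⟨j, by omega, by omega, Or.inl rfl⟩
    · exact ⟨j - k, by omega, by omega, Or.inr (by omega)⟩
  obtain ⟨l, rfl⟩ : ∃ l', l = l' + 1 := ⟨l - 1, by omega⟩
  change cvec k (l + 1) ⬝ᵥ yvec k j = cvec k (l + 1) ⬝ᵥ yvec k (j + 1) + 1
  rw [dotProduct_eq_add_of_sub_eq_single_sub_single (yvec_sub_yvec_succ hm₁ hm₂ hjm),
    cvec_succ_of_lt (by dsimp only; omega), cvec_succ_of_le_of_lt (by dsimp only; omega)
      (by dsimp only; omega)]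
  ring

/-- decreasing order within each group: for every `ℓ ≥ 1` and every
`j ∈ {1,…,k-1} ∪ {k+1,…,2k-1}`, one has `c^ℓ·y^j = c^ℓ·y^{j+1} + 1`. -/
theorem stmt11 (k : ℕ) (hk : 1 ≤ k) (l : ℕ) (hl : 1 ≤ l) (j : ℕ)
    (hj : (1 ≤ j ∧ j ≤ k - 1) ∨ (k + 1 ≤ j ∧ j ≤ 2 * k - 1)) :
    ∑ i, cvec k l i * yvec k j i = ∑ i, cvec k l i * yvec k (j + 1) i + 1 :=
  stmt11_general k l hl j hj
end

section
/- With the same worst-case construction (points y^j and cost vectors c^ℓ): for every ℓ ≥ 1, if ℓ is odd then c^ℓ·y^k = c^ℓ·y^{k+1} + 1, and if ℓ is even then c^ℓ·y^{2k} = c^ℓ·y^1 + 1. -/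
/-- ℕ-indexed version of `yvec` (argument is `i' = i+1`). -/
def Y (k j i' : ℕ) : ℤ :=
  let j' := if j ≤ k then j else j - k
  if i' ≤ k - 1 then (if j' ≤ i' then 1 else 0)
  else if i' ≤ 2 * k - 2 then (if i' - (k - 1) < j' then 1 else 0)
  else if i' ≤ 5 * k - 2 then (if j ≤ k then 1 else 0)
  else (if j ≤ k then 0 else 1)

def Dv (k l i' : ℕ) : ℤ :=
  if l = 1 then
    if i' ≤ k - 1 then 1
    else if i' ≤ 2 * k - 2 then 0
    else if i' ≤ 3 * k - 2 then 1
    else 0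
  else
    if i' ≤ k - 1 then 0
    else if i' ≤ 2 * k - 2 then 1
    else if i' ≤ 5 * k - 2 then (if Odd l then 1 else 0)
    else (if Even l then 1 else 0)

lemma yvec_eq (k j : ℕ) (i : Fin (8*k-2)) : yvec k j i = Y k j ((i:ℕ)+1) := rfl
lemma dvec_eq (k l : ℕ) (i : Fin (8*k-2)) : dvec k l i = Dv k l ((i:ℕ)+1) := rfl

lemma block_sum (m : ℕ) (f : ℕ → ℤ) (c1 c2 c3 c4 c5 : ℤ)
    (h1 : ∀ i, 1 ≤ i → i ≤ m → f i = c1)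
    (h2 : ∀ i, m+1 ≤ i → i ≤ 2*m → f i = c2)
    (h3 : ∀ i, 2*m+1 ≤ i → i ≤ 3*m+1 → f i = c3)
    (h4 : ∀ i, 3*m+2 ≤ i → i ≤ 5*m+3 → f i = c4)
    (h5 : ∀ i, 5*m+4 ≤ i → i ≤ 8*m+6 → f i = c5) :
    ∑ i ∈ Finset.range (8*m+6), f (i+1)
      = m*(c1+c2) + (m+1)*c3 + (2*m+2)*c4 + (3*m+3)*c5 := by
  have key : ∑ i ∈ Finset.range (8*m+6), f (i+1) = ∑ i ∈ Finset.Ico 1 (8*m+7), f i := by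
    rw [Finset.sum_Ico_eq_sum_range]
    have h : 8*m+7-1 = 8*m+6 := by omega
    rw [h]
    exact Finset.sum_congr rfl (fun i _ => by rw [add_comm])
  rw [key]
  rw [← Finset.sum_Ico_consecutive f (by omega : 1 ≤ m+1) (by omega : m+1 ≤ 8*m+7),
      ← Finset.sum_Ico_consecutive f (by omega : m+1 ≤ 2*m+1) (by omega : 2*m+1 ≤ 8*m+7),
      ← Finset.sum_Ico_consecutive f (by omega : 2*m+1 ≤ 3*m+2) (by omega : 3*m+2 ≤ 8*m+7),
      ← Finset.sum_Ico_consecutive f (by omega : 3*m+2 ≤ 5*m+4) (by omega : 5*m+4 ≤ 8*m+7)]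
  have s1 : ∑ i ∈ Finset.Ico (1) (m+1), f i = (m:ℤ)*c1 := by
    have hc : ∀ i ∈ Finset.Ico (1) (m+1), f i = c1 := fun i hi => by
      rw [Finset.mem_Ico] at hi; exact h1 i hi.1 (by omega)
    rw [Finset.sum_congr rfl hc, Finset.sum_const, Nat.card_Ico, nsmul_eq_mul]
    all_goals (congr 1 <;> omega)
  have s2 : ∑ i ∈ Finset.Ico (m+1) (2*m+1), f i = (m:ℤ)*c2 := by
    have hc : ∀ i ∈ Finset.Ico (m+1) (2*m+1), f i = c2 := fun i hi => by
      rw [Finset.mem_Ico] at hi; exact h2 i hi.1 (by omega)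
    rw [Finset.sum_congr rfl hc, Finset.sum_const, Nat.card_Ico, nsmul_eq_mul]
    all_goals (congr 1 <;> omega)
  have s3 : ∑ i ∈ Finset.Ico (2*m+1) (3*m+2), f i = ((m:ℤ)+1)*c3 := by
    have hc : ∀ i ∈ Finset.Ico (2*m+1) (3*m+2), f i = c3 := fun i hi => by
      rw [Finset.mem_Ico] at hi; exact h3 i hi.1 (by omega)
    rw [Finset.sum_congr rfl hc, Finset.sum_const, Nat.card_Ico, nsmul_eq_mul]
    all_goals (congr 1 <;> omega)
  have s4 : ∑ i ∈ Finset.Ico (3*m+2) (5*m+4), f i = (2*(m:ℤ)+2)*c4 := by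
    have hc : ∀ i ∈ Finset.Ico (3*m+2) (5*m+4), f i = c4 := fun i hi => by
      rw [Finset.mem_Ico] at hi; exact h4 i hi.1 (by omega)
    rw [Finset.sum_congr rfl hc, Finset.sum_const, Nat.card_Ico, nsmul_eq_mul]
    all_goals (congr 1 <;> omega)
  have s5 : ∑ i ∈ Finset.Ico (5*m+4) (8*m+7), f i = (3*(m:ℤ)+3)*c5 := by
    have hc : ∀ i ∈ Finset.Ico (5*m+4) (8*m+7), f i = c5 := fun i hi => by
      rw [Finset.mem_Ico] at hi; exact h5 i hi.1 (by omega)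
    rw [Finset.sum_congr rfl hc, Finset.sum_const, Nat.card_Ico, nsmul_eq_mul]
    all_goals (congr 1 <;> omega)
  rw [s1, s2, s3, s4, s5]
  push_cast
  ring

section Dsums
variable (m : ℕ)

/-- Reduce a `Fin (8*(m+1)-2)` sum to a `range (8*m+6)` sum. -/
lemma fin_to_range (g : ℕ → ℤ) :
    ∑ i : Fin (8*(m+1)-2), g ((i:ℕ)+1) = ∑ i ∈ Finset.range (8*m+6), g (i+1) := by
  rw [Fin.sum_univ_eq_sum_range (fun i => g (i+1)) (8*(m+1)-2)]
  have h : 8*(m+1)-2 = 8*m+6 := by omega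
  rw [h]

lemma fin_block_sum (g : ℕ → ℤ) (c1 c2 c3 c4 c5 : ℤ)
    (h1 : ∀ i, 1 ≤ i → i ≤ m → g i = c1)
    (h2 : ∀ i, m+1 ≤ i → i ≤ 2*m → g i = c2)
    (h3 : ∀ i, 2*m+1 ≤ i → i ≤ 3*m+1 → g i = c3)
    (h4 : ∀ i, 3*m+2 ≤ i → i ≤ 5*m+3 → g i = c4)
    (h5 : ∀ i, 5*m+4 ≤ i → i ≤ 8*m+6 → g i = c5) :
    ∑ i : Fin (8*(m+1)-2), g ((i:ℕ)+1)
      = m*(c1+c2) + (m+1)*c3 + (2*m+2)*c4 + (3*m+3)*c5 :=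
  (fin_to_range m g).trans (block_sum m g c1 c2 c3 c4 c5 h1 h2 h3 h4 h5)

set_option maxHeartbeats 1000000 in
lemma sumD1_one  :
    ∑ i, dvec (m+1) 1 i * (yvec (m+1) (m+1) i - yvec (m+1) (m+1+1) i) = 1 := by
  simp only [dvec_eq, yvec_eq]
  refine Eq.trans (fin_block_sum m (fun n => Dv (m+1) 1 n * (Y (m+1) (m+1) n - Y (m+1) (m+1+1) n)) (-1) 0 1 0 0 ?_ ?_ ?_ ?_ ?_) ?_
  rotate_right
  · push_cast; ring
  all_goals intro i hi1 hi2
  all_goals simp only [Dv, Y]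
  all_goals split_ifs <;> first | omega | exact absurd (by assumption) not_false

set_option maxHeartbeats 1000000 in
lemma sumD2_one  :
    ∑ i, dvec (m+1) 1 i * (yvec (m+1) (2*(m+1)) i - yvec (m+1) (1) i) = -(2*(m:ℤ)+1) := by
  simp only [dvec_eq, yvec_eq]
  refine Eq.trans (fin_block_sum m (fun n => Dv (m+1) 1 n * (Y (m+1) (2*(m+1)) n - Y (m+1) (1) n)) (-1) 0 (-1) 0 0 ?_ ?_ ?_ ?_ ?_) ?_
  rotate_right
  · push_cast; ring
  all_goals intro i hi1 hi2
  all_goals simp only [Dv, Y]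
  all_goals split_ifs <;> first | omega | exact absurd (by assumption) not_false

set_option maxHeartbeats 1000000 in
lemma sumD1_odd (l : ℕ) (h2 : 2 ≤ l) (hl : Odd l) :
    ∑ i, dvec (m+1) l i * (yvec (m+1) (m+1) i - yvec (m+1) (m+1+1) i) = 4*(m:ℤ)+3 := by
  have hne : l ≠ 1 := by omega
  have he : ¬ Even l := by simp [Nat.even_iff, Nat.odd_iff] at *; omega
  have hl' : Odd l := hl
  simp only [dvec_eq, yvec_eq]
  refine Eq.trans (fin_block_sum m (fun n => Dv (m+1) l n * (Y (m+1) (m+1) n - Y (m+1) (m+1+1) n)) 0 1 1 1 0 ?_ ?_ ?_ ?_ ?_) ?_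
  rotate_right
  · push_cast; ring
  all_goals intro i hi1 hi2
  all_goals simp only [Dv, Y, hne, hl', he]
  all_goals split_ifs <;> first | omega | exact absurd (by assumption) not_false

set_option maxHeartbeats 1000000 in
lemma sumD1_even (l : ℕ) (h2 : 2 ≤ l) (hl : Even l) :
    ∑ i, dvec (m+1) l i * (yvec (m+1) (m+1) i - yvec (m+1) (m+1+1) i) = -(2*(m:ℤ)+3) := by
  have hne : l ≠ 1 := by omega
  have ho : ¬ Odd l := by simp [Nat.even_iff, Nat.odd_iff] at *; omega
  have hl' : Even l := hl
  simp only [dvec_eq, yvec_eq]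
  refine Eq.trans (fin_block_sum m (fun n => Dv (m+1) l n * (Y (m+1) (m+1) n - Y (m+1) (m+1+1) n)) 0 1 0 0 (-1) ?_ ?_ ?_ ?_ ?_) ?_
  rotate_right
  · push_cast; ring
  all_goals intro i hi1 hi2
  all_goals simp only [Dv, Y, hne, hl', ho]
  all_goals split_ifs <;> first | omega | exact absurd (by assumption) not_false

set_option maxHeartbeats 1000000 in
lemma sumD2_odd (l : ℕ) (h2 : 2 ≤ l) (hl : Odd l) :
    ∑ i, dvec (m+1) l i * (yvec (m+1) (2*(m+1)) i - yvec (m+1) (1) i) = -(2*(m:ℤ)+3) := by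
  have hne : l ≠ 1 := by omega
  have he : ¬ Even l := by simp [Nat.even_iff, Nat.odd_iff] at *; omega
  have hl' : Odd l := hl
  simp only [dvec_eq, yvec_eq]
  refine Eq.trans (fin_block_sum m (fun n => Dv (m+1) l n * (Y (m+1) (2*(m+1)) n - Y (m+1) (1) n)) 0 1 (-1) (-1) 0 ?_ ?_ ?_ ?_ ?_) ?_
  rotate_right
  · push_cast; ring
  all_goals intro i hi1 hi2
  all_goals simp only [Dv, Y, hne, hl', he]
  all_goals split_ifs <;> first | omega | exact absurd (by assumption) not_false

set_option maxHeartbeats 1000000 in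
lemma sumD2_even (l : ℕ) (h2 : 2 ≤ l) (hl : Even l) :
    ∑ i, dvec (m+1) l i * (yvec (m+1) (2*(m+1)) i - yvec (m+1) (1) i) = 4*(m:ℤ)+3 := by
  have hne : l ≠ 1 := by omega
  have ho : ¬ Odd l := by simp [Nat.even_iff, Nat.odd_iff] at *; omega
  have hl' : Even l := hl
  simp only [dvec_eq, yvec_eq]
  refine Eq.trans (fin_block_sum m (fun n => Dv (m+1) l n * (Y (m+1) (2*(m+1)) n - Y (m+1) (1) n)) 0 1 0 0 1 ?_ ?_ ?_ ?_ ?_) ?_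
  rotate_right
  · push_cast; ring
  all_goals intro i hi1 hi2
  all_goals simp only [Dv, Y, hne, hl', ho]
  all_goals split_ifs <;> first | omega | exact absurd (by assumption) not_false

end Dsums

lemma cvec_succ_sum (k l : ℕ) (w : Fin (8*k-2) → ℤ) :
    ∑ i, cvec k (l+1) i * w i = 2 * ∑ i, cvec k l i * w i + ∑ i, dvec k (l+1) i * w i := by
  rw [Finset.mul_sum, ← Finset.sum_add_distrib]
  refine Finset.sum_congr rfl fun i _ => ?_
  show (2 * cvec k l i + dvec k (l+1) i) * w i = _
  ring

lemma main_inv (m : ℕ) : ∀ l, 1 ≤ l →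
    (Odd l → (∑ i, cvec (m+1) l i * (yvec (m+1) (m+1) i - yvec (m+1) (m+1+1) i) = 1 ∧
              ∑ i, cvec (m+1) l i * (yvec (m+1) (2*(m+1)) i - yvec (m+1) 1 i) = -(2*(m:ℤ)+1))) ∧
    (Even l → (∑ i, cvec (m+1) l i * (yvec (m+1) (m+1) i - yvec (m+1) (m+1+1) i) = -(2*(m:ℤ)+1) ∧
               ∑ i, cvec (m+1) l i * (yvec (m+1) (2*(m+1)) i - yvec (m+1) 1 i) = 1)) := by
  intro l
  induction l with
  | zero => omega
  | succ n ih =>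
    intro _
    rcases Nat.eq_zero_or_pos n with hn | hn
    · subst hn
      have hc : ∀ w : Fin (8*(m+1)-2) → ℤ,
          ∑ i, cvec (m+1) 1 i * w i = ∑ i, dvec (m+1) 1 i * w i := by
        intro w
        refine Finset.sum_congr rfl fun i _ => ?_
        show (2 * cvec (m+1) 0 i + dvec (m+1) 1 i) * w i = _
        show (2 * 0 + dvec (m+1) 1 i) * w i = _
        ring
      constructor
      · intro _
        rw [hc, hc]
        exact ⟨sumD1_one m, sumD2_one m⟩
      · intro h
        exact absurd h (by simp)
    · have ihn := ih hn
      have h2 : 2 ≤ n + 1 := by omega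
      rcases Nat.even_or_odd n with he | ho
      · -- n even (and n ≥ 1), so n+1 odd
        have hodd : Odd (n+1) := Even.add_one he
        have hS := ihn.2 he
        constructor
        · intro _
          constructor
          · rw [cvec_succ_sum, hS.1, sumD1_odd m (n+1) h2 hodd]; ring
          · rw [cvec_succ_sum, hS.2, sumD2_odd m (n+1) h2 hodd]; ring
        · intro h
          exact absurd h (by simpa using hodd)
      · -- n odd, so n+1 even
        have heven : Even (n+1) := Odd.add_one ho
        have hS := ihn.1 ho
        constructor
        · intro h
          exact absurd h (by simpa using heven)
        · intro _
          constructor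
          · rw [cvec_succ_sum, hS.1, sumD1_even m (n+1) h2 heven]; ring
          · rw [cvec_succ_sum, hS.2, sumD2_even m (n+1) h2 heven]; ring

/-- decreasing intergroup ordering: for every `ℓ ≥ 1`, if `ℓ` is odd then
`c^ℓ·y^k = c^ℓ·y^{k+1} + 1`, and if `ℓ` is even then `c^ℓ·y^{2k} = c^ℓ·y^1 + 1`. -/
theorem stmt12 (k : ℕ) (hk : 1 ≤ k) (l : ℕ) (hl : 1 ≤ l) :
    (Odd l → ∑ i, cvec k l i * yvec k k i = ∑ i, cvec k l i * yvec k (k + 1) i + 1) ∧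
    (Even l → ∑ i, cvec k l i * yvec k (2 * k) i = ∑ i, cvec k l i * yvec k 1 i + 1) := by
  obtain ⟨m, rfl⟩ : ∃ m, k = m + 1 := ⟨k - 1, by omega⟩
  have key := main_inv m l hl
  have hsub : ∀ (a b : ℕ),
      ∑ i, cvec (m+1) l i * (yvec (m+1) a i - yvec (m+1) b i)
        = ∑ i, cvec (m+1) l i * yvec (m+1) a i - ∑ i, cvec (m+1) l i * yvec (m+1) b i := by
    intro a b
    rw [← Finset.sum_sub_distrib]
    exact Finset.sum_congr rfl fun i _ => by ring
  constructor
  · intro ho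
    have h := (key.1 ho).1
    rw [hsub] at h
    linarith
  · intro he
    have h := (key.2 he).2
    rw [hsub] at h
    linarith
end

section
/- Suppose x̃, x⋆ ∈ P ∩ ℤ^n, z⋆ = x⋆ - x̃, and z is an exhaustive feasible direction maximizing c·z'/ρ(x̃,z') over feasible directions z' with c·z' > 0, where ρ satisfies ρ(x̃, z⋆) ≤ n and ρ(x̃, z) ≥ 1/2. Then c·z ≥ (1/(2n))·c·z⋆, i.e., the maximum-ratio augmentation direction recovers at least a 1/(2n) fraction of the optimal remaining improvement. -/
/-- If `z⋆ = x⋆ - x̃` with `ρ(x̃, z⋆) ≤ n` (and `ρ(x̃, z⋆) > 0`),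
`z` is an exhaustive maximum-ratio direction with `ρ(x̃, z) ≥ 1/2`, and
`c·z/ρ(x̃,z) ≥ c·z⋆/ρ(x̃,z⋆)` with remaining gap `c·z⋆ > 0`, then
`c·z ≥ (1/(2n))·c·z⋆`. -/
theorem stmt18 (n : ℕ) (c xt xs z : Fin n → ℝ)
    (ρ : (Fin n → ℝ) → (Fin n → ℝ) → ℝ)
    (zs : Fin n → ℝ) (hzs : zs = fun j => xs j - xt j)
    (hub : ρ xt zs ≤ n) (hpos : 0 < ρ xt zs) (hlb : 1 / 2 ≤ ρ xt z)
    (hgap : 0 < ∑ j, c j * zs j)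
    (hopt : (∑ j, c j * zs j) / ρ xt zs ≤ (∑ j, c j * z j) / ρ xt z) :
    (1 / (2 * (n : ℝ))) * ∑ j, c j * zs j ≤ ∑ j, c j * z j := by
  have hn : (0:ℝ) < n := lt_of_lt_of_le hpos hub
  have hρz : (0:ℝ) < ρ xt z := lt_of_lt_of_le (by norm_num) hlb
  have h1 : (∑ j, c j * zs j) / n ≤ (∑ j, c j * zs j) / ρ xt zs :=
    div_le_div_of_nonneg_left hgap.le hpos hub
  have h2 : (∑ j, c j * zs j) / n ≤ (∑ j, c j * z j) / ρ xt z := h1.trans hopt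
  have h3 : ρ xt z * ((∑ j, c j * zs j) / n) ≤ ∑ j, c j * z j := by
    rw [← le_div_iff₀' hρz]; exact h2
  calc (1 / (2 * (n : ℝ))) * ∑ j, c j * zs j
      ≤ ρ xt z * ((∑ j, c j * zs j) / n) := by
        rw [mul_div_assoc', div_mul_eq_mul_div, div_le_div_iff₀ (by positivity) hn]
        nlinarith [mul_le_mul_of_nonneg_right hlb hgap.le, mul_pos hgap hn]
    _ ≤ ∑ j, c j * z j := h3
end

section
/- Let T ⊆ {0,1}^E be the set of characteristic vectors of Hamiltonian tours of the complete graph K_k (so |E| = k(k-1)/2). Every x ∈ T satisfies |supp(x)| = k; consequently, for the TSP polytope P = conv(T), bit scaling and geometric scaling solve max{c·x : x ∈ T} with at most O(k log C) augmentations, where C = ‖c‖_∞ + 1, improving on the general O(k² log C) bound. -/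
/-- The edge set of the complete graph `K_k`, as ordered pairs `(v, w)` with `v < w`. -/
abbrev tspEdge (k : ℕ) := {p : Fin k × Fin k // p.1 < p.2}

open Classical in
/-- The set of characteristic vectors of Hamiltonian tours of `K_k`: a tour is given by
a cyclic permutation `σ` of the vertices (a cycle with full support), using exactly the
edges `{v, σ v}`. -/
noncomputable def tourSet (k : ℕ) : Set (tspEdge k → ℤ) :=
  {x | ∃ σ : Equiv.Perm (Fin k), σ.IsCycle ∧ σ.support = Finset.univ ∧
    ∀ e : tspEdge k,
      x e = if ∃ v, (e.val.1 = v ∧ e.val.2 = σ v) ∨ (e.val.1 = σ v ∧ e.val.2 = v)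
        then 1 else 0}

open Classical in
theorem tour_card (k : ℕ) (hk : 3 ≤ k) :
    ∀ x ∈ tourSet k, (Finset.univ.filter (fun e => x e ≠ 0)).card = k := by
  rintro x ⟨σ, hc, hsupp, hx⟩
  have hne : ∀ v : Fin k, σ v ≠ v := by
    intro v
    have : v ∈ σ.support := hsupp ▸ Finset.mem_univ v
    exact Equiv.Perm.mem_support.mp this
  have hcycleOn : σ.IsCycleOn (Finset.univ : Finset (Fin k)) := by
    have := hc.isCycleOn
    convert this using 1
    ext v; simp [hne v]
  have hsq : ∀ v : Fin k, σ (σ v) ≠ v := by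
    intro v hv
    have h2 : (σ ^ 2) v = v := by rw [pow_two]; exact hv
    rw [hcycleOn.pow_apply_eq (Finset.mem_univ v), Finset.card_univ,
      Fintype.card_fin] at h2
    have := Nat.le_of_dvd (by norm_num) h2
    omega
  set f : Fin k → tspEdge k := fun v =>
    if h : v < σ v then ⟨(v, σ v), h⟩ else
      ⟨(σ v, v), lt_of_le_of_ne (not_lt.mp h) (hne v)⟩ with hf
  have hinj : Function.Injective f := by
    intro v w hvw
    simp only [hf] at hvw
    split_ifs at hvw with h1 h2 h2 <;>
      rw [Subtype.mk.injEq, Prod.mk.injEq] at hvw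
    · exact hvw.1
    · exact absurd (show σ (σ w) = w by rw [← hvw.1]; exact hvw.2) (hsq w)
    · exact absurd (show σ (σ w) = w by rw [← hvw.2]; exact hvw.1) (hsq w)
    · exact hvw.2
  have hset : (Finset.univ.filter (fun e => x e ≠ 0)) = Finset.univ.image f := by
    ext e
    simp only [Finset.mem_filter, Finset.mem_univ, true_and, Finset.mem_image]
    rw [hx e]
    constructor
    · intro h
      by_cases hcond : ∃ v, (e.val.1 = v ∧ e.val.2 = σ v) ∨ (e.val.1 = σ v ∧ e.val.2 = v)
      · obtain ⟨v, ⟨h1, h2⟩ | ⟨h1, h2⟩⟩ := hcond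
        · refine ⟨v, ?_⟩
          have hlt : v < σ v := by rw [← h2, ← h1]; exact e.2
          rw [hf]; simp only [hlt, dif_pos]
          exact Subtype.ext (Prod.ext_iff.mpr ⟨h1.symm, h2.symm⟩)
        · refine ⟨v, ?_⟩
          have hlt : ¬ v < σ v := not_lt.mpr (le_of_lt (by rw [← h1, ← h2]; exact e.2))
          rw [hf]; simp only [hlt, dif_neg, not_false_iff]
          exact Subtype.ext (Prod.ext_iff.mpr ⟨h1.symm, h2.symm⟩)
      · simp [hcond] at h
    · rintro ⟨v, rfl⟩
      have : ∃ w, ((f v).val.1 = w ∧ (f v).val.2 = σ w) ∨ ((f v).val.1 = σ w ∧ (f v).val.2 = w) := by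
        refine ⟨v, ?_⟩
        by_cases h1 : v < σ v <;> simp [hf, h1]
      simp [this]
  rw [hset, Finset.card_image_of_injective _ hinj, Finset.card_univ, Fintype.card_fin]

open Classical in
theorem tour_entries (k : ℕ) : ∀ x ∈ tourSet k, ∀ e, x e = 0 ∨ x e = 1 := by
  rintro x ⟨σ, _, _, hx⟩ e
  rw [hx e]
  by_cases h : ∃ v, (e.val.1 = v ∧ e.val.2 = σ v) ∨ (e.val.1 = σ v ∧ e.val.2 = v) <;> simp [h]

theorem tour_sum (k : ℕ) (hk : 3 ≤ k) :
    ∀ x ∈ tourSet k, ∑ e, x e = k := by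
  intro x hx
  have h01 := tour_entries k x hx
  have hcard := tour_card k hk x hx
  calc ∑ e, x e = ∑ e ∈ Finset.univ.filter (fun e => x e ≠ 0), x e := by
        rw [Finset.sum_filter_ne_zero]
    _ = ∑ e ∈ Finset.univ.filter (fun e => x e ≠ 0), 1 := by
        apply Finset.sum_congr rfl
        intro e he
        rcases h01 e with h | h
        · simp [Finset.mem_filter, h] at he
        · exact h
    _ = k := by rw [Finset.sum_const, hcard]; simp


open Classical in
/-- every Hamiltonian tour vector of `K_k` has exactly `k` nonzero entries;
consequently (by the theorem on structured 0/1 polytopes) bit scaling and geometric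
scaling solve `max{c·x : x ∈ T}` with `O(k log C)` augmentations: each bit-scaling
phase admits at most `2k` augmentations, and with at most `2k` augmentations per phase
the total over the `1 + ⌈log₂ C⌉` phases is at most `2k·(1 + ⌈log₂ C⌉)`, improving on
the general `O(k² log C)` bound. -/
theorem stmt19 (k : ℕ) (hk : 3 ≤ k) :
    (∀ x ∈ tourSet k, (Finset.univ.filter (fun e => x e ≠ 0)).card = k) ∧
    (∀ cμ ct : tspEdge k → ℤ, (∀ e, 0 ≤ cμ e) → (∀ e, ct e = 0 ∨ ct e = 1) →
      ∀ xμ x' : tspEdge k → ℤ, xμ ∈ tourSet k → x' ∈ tourSet k →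
        (∀ y ∈ tourSet k, ∑ e, cμ e * y e ≤ ∑ e, cμ e * xμ e) →
        (∀ y ∈ tourSet k, ∑ e, (2 * cμ e + ct e) * y e ≤
          ∑ e, (2 * cμ e + ct e) * x' e) →
        ∑ e, (2 * cμ e + ct e) * (x' e - xμ e) ≤ 2 * k) ∧
    (∀ C : ℕ, ∀ A : ℕ → ℕ, (∀ p, A p ≤ 2 * k) →
      ∑ p ∈ Finset.range (1 + Nat.clog 2 C), A p ≤ 2 * k * (1 + Nat.clog 2 C)) := by
  refine ⟨tour_card k hk, ?_, ?_⟩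
  · intro cμ ct hcμ hct xμ x' hxμ hx' hoptμ hopt'
    have h1 : ∑ e, cμ e * x' e ≤ ∑ e, cμ e * xμ e := hoptμ x' hx'
    have h2 : ∑ e, ct e * x' e ≤ (k : ℤ) := by
      have : ∑ e, ct e * x' e ≤ ∑ e, x' e := by
        apply Finset.sum_le_sum
        intro e _
        rcases tour_entries k x' hx' e with h | h <;> rcases hct e with h' | h' <;>
          simp [h, h']
      rw [tour_sum k hk x' hx'] at this
      exact this
    have h3 : (0:ℤ) ≤ ∑ e, ct e * xμ e := by
      apply Finset.sum_nonneg
      intro e _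
      rcases tour_entries k xμ hxμ e with h | h <;> rcases hct e with h' | h' <;>
        simp [h, h']
    have expand : ∑ e, (2 * cμ e + ct e) * (x' e - xμ e) =
        2 * (∑ e, cμ e * x' e - ∑ e, cμ e * xμ e) +
        (∑ e, ct e * x' e - ∑ e, ct e * xμ e) := by
      rw [← Finset.sum_sub_distrib, ← Finset.sum_sub_distrib, Finset.mul_sum,
        ← Finset.sum_add_distrib]
      apply Finset.sum_congr rfl
      intro e _
      ring
    rw [expand]
    have : (k:ℤ) ≤ 2 * k := by omega
    linarith
  · intro C A hA
    calc ∑ p ∈ Finset.range (1 + Nat.clog 2 C), A p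
        ≤ ∑ p ∈ Finset.range (1 + Nat.clog 2 C), 2 * k :=
          Finset.sum_le_sum (fun p _ => hA p)
      _ = 2 * k * (1 + Nat.clog 2 C) := by
          rw [Finset.sum_const, Finset.card_range]; ring
end
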